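/- Let ({H_a : a ∈ A}, H) be a strict team, and fix a nonempty B ⊆ A and nonempty X_b ⊆ H_b for each b ∈ B. Then for each index ã in the induced index set à (consisting of A\B together with the connected components of the 𝐇_b minus X_b), the carrier H_ã is connected in 𝐇. -/

import Mathlib

/-! Basic hypergraph notions (following Došen–Petrić / Curien–Obradović–Ivanović). -/

variable {α : Type*}

/-- `ConnIn E X`: the restriction of the edge set `E` to `X` is connected, i.e. every
nontrivial partition of `X` is crossed by an edge of `E` lying inside `X`. -/
def ConnIn (E : Set (Set α)) (X : Set α) : Prop :=
  ∀ X₁ X₂ : Set α, X₁ ∪ X₂ = X → Disjoint X₁ X₂ → X₁.Nonempty → X₂.Nonempty →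
    ∃ e ∈ E, e ⊆ X ∧ ¬ e ⊆ X₁ ∧ ¬ e ⊆ X₂

/-- An atomic hypergraph: a carrier set together with a set of nonempty hyperedges covering
the carrier and containing all singletons. -/
structure AtomicHypergraph (α : Type*) where
  carrier : Set α
  edges : Set (Set α)
  edges_nonempty : ∀ e ∈ edges, e.Nonempty
  edges_sub : ∀ e ∈ edges, e ⊆ carrier
  atomic : ∀ x ∈ carrier, {x} ∈ edges

/-- A subset `X` is connected in the hypergraph `G`. -/
def AtomicHypergraph.ConnectedIn (G : AtomicHypergraph α) (X : Set α) : Prop := ConnIn G.edges X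

/-- The hypergraph `G` is connected. -/
def AtomicHypergraph.Connected (G : AtomicHypergraph α) : Prop := G.ConnectedIn G.carrier

/-- Restriction of a hypergraph to a subset. -/
def AtomicHypergraph.restrict (G : AtomicHypergraph α) (X : Set α) : AtomicHypergraph α where
  carrier := G.carrier ∩ X
  edges := {e | e ∈ G.edges ∧ e ⊆ X}
  edges_nonempty := fun e he => G.edges_nonempty e he.1
  edges_sub := fun e he => Set.subset_inter (G.edges_sub e he.1) he.2
  atomic := fun x hx => ⟨G.atomic x hx.1, Set.singleton_subset_iff.2 hx.2⟩

/-- `Y` is a connected component of the hypergraph `G`: a maximal nonempty connected subset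
of the carrier. -/
def IsCC (G : AtomicHypergraph α) (Y : Set α) : Prop :=
  Y.Nonempty ∧ Y ⊆ G.carrier ∧ G.ConnectedIn Y ∧
    ∀ Z, Y ⊆ Z → Z ⊆ G.carrier → G.ConnectedIn Z → Z = Y

/-- A preteam: a finite family of pairwise disjoint connected participating hypergraphs
whose carriers partition the carrier of a connected coordinating hypergraph. -/
structure Preteam (α : Type*) (A : Type*) where
  part : A → AtomicHypergraph α
  coord : AtomicHypergraph α
  finite : coord.carrier.Finite
  part_connected : ∀ a, (part a).Connected
  coord_connected : coord.Connected
  part_nonempty : ∀ a, (part a).carrier.Nonempty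
  disj : Pairwise fun a b => Disjoint (part a).carrier (part b).carrier
  union : (⋃ a, (part a).carrier) = coord.carrier

/-- The coordinating hypergraph with the roots `⋃_{b ∈ B} X b` removed. -/
def Preteam.removed {α A : Type*} (τ : Preteam α A) (B : Set A) (X : A → Set α) :
    AtomicHypergraph α :=
  τ.coord.restrict (τ.coord.carrier \ ⋃ b ∈ B, X b)

/-- A preteam is a strict team if, for each nonempty `B ⊆ A` and nonempty `X b ⊆ H_b`
(`b ∈ B`), the carrier of each participating hypergraph with `a ∉ B`, and each connected
component of `H_b` minus `X b` (`b ∈ B`), is included in a single connected component of the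
coordinating hypergraph minus `⋃_{b ∈ B} X b`. -/
def Preteam.IsStrictTeam {α A : Type*} (τ : Preteam α A) : Prop :=
  ∀ (B : Set A) (X : A → Set α), B.Nonempty →
    (∀ b ∈ B, (X b).Nonempty ∧ X b ⊆ (τ.part b).carrier) →
    (∀ a ∉ B, ∃ Y, IsCC (τ.removed B X) Y ∧ (τ.part a).carrier ⊆ Y) ∧
    (∀ b ∈ B, ∀ C, IsCC ((τ.part b).restrict ((τ.part b).carrier \ X b)) C →
      ∃ Y, IsCC (τ.removed B X) Y ∧ C ⊆ Y)

/-!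
Apply the strict-team property to roots chosen so that the coordinating hypergraph minus the
roots has exactly the target set as carrier: for `a ∉ B` root every other participant in its
whole carrier; for a component `C` of `H_b` minus `X b` root every participant in its whole
carrier except `H_b`, rooted in `H_b \ C` (nonempty, as it contains `X b`). The component of
the remaining hypergraph that contains the target set is then the target set itself, so that set
is connected.
-/

theorem ConnIn.mono_edges {E E' : Set (Set α)} (h : E ⊆ E') {X : Set α} (hX : ConnIn E X) :
    ConnIn E' X := fun X₁ X₂ hu hd h₁ h₂ => by
  obtain ⟨e, he, hsplit⟩ := hX X₁ X₂ hu hd h₁ h₂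
  exact ⟨e, h he, hsplit⟩

namespace AtomicHypergraph

theorem ConnectedIn.of_restrict {G : AtomicHypergraph α} {T S : Set α}
    (h : (G.restrict T).ConnectedIn S) : G.ConnectedIn S :=
  ConnIn.mono_edges (fun _ he => he.1) h

theorem isCC_restrict_self {G : AtomicHypergraph α} {S C : Set α}
    (hC : IsCC (G.restrict S) C) : IsCC (G.restrict C) C := by
  obtain ⟨hne, hsub, hconn, -⟩ := hC
  refine ⟨hne, fun x hx => ⟨(hsub hx).1, hx⟩, ?_, fun Z hCZ hZ _ => ?_⟩
  · intro X₁ X₂ hu hd h₁ h₂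
    obtain ⟨e, he, heC, hsplit⟩ := hconn X₁ X₂ hu hd h₁ h₂
    exact ⟨e, ⟨he.1, heC⟩, heC, hsplit⟩
  · exact hCZ.antisymm' fun x hx => (hZ hx).2

end AtomicHypergraph

theorem IsCC.connectedIn_of_carrier_subset {G : AtomicHypergraph α} {Y S : Set α}
    (hY : IsCC G Y) (hGS : G.carrier ⊆ S) (hSY : S ⊆ Y) : G.ConnectedIn S := by
  obtain rfl : S = Y := hSY.antisymm (hY.2.1.trans hGS)
  exact hY.2.2.1

namespace Preteam

variable {A : Type*}

theorem removed_carrier_subset (τ : Preteam α A) {B : Set A} {X : A → Set α} {i : A}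
    (h : ∀ c ≠ i, c ∈ B ∧ (τ.part c).carrier ⊆ X c) :
    (τ.removed B X).carrier ⊆ (τ.part i).carrier \ ⋃ b ∈ B, X b := by
  rintro x ⟨hx, -, hxX⟩
  rw [← τ.union, Set.mem_iUnion] at hx
  obtain ⟨c, hxc⟩ := hx
  obtain rfl | hci := eq_or_ne c i
  · exact ⟨hxc, hxX⟩
  · obtain ⟨hcB, hcX⟩ := h c hci
    exact absurd (Set.mem_biUnion hcB (hcX hxc)) hxX

theorem IsStrictTeam.connectedIn_part {τ : Preteam α A} (hτ : τ.IsStrictTeam) {a b : A}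
    (hab : a ≠ b) : τ.coord.ConnectedIn (τ.part a).carrier := by
  have hroots : ∀ c ∈ ({a}ᶜ : Set A),
      (τ.part c).carrier.Nonempty ∧ (τ.part c).carrier ⊆ (τ.part c).carrier :=
    fun c _ => ⟨τ.part_nonempty c, subset_rfl⟩
  obtain ⟨Y, hY, haY⟩ := (hτ {a}ᶜ (fun c => (τ.part c).carrier) ⟨b, hab.symm⟩ hroots).1 a
    (Set.notMem_compl_iff.2 rfl)
  have hcarrier := τ.removed_carrier_subset (i := a) fun c hc => ⟨hc, subset_rfl⟩
  exact (hY.connectedIn_of_carrier_subset (hcarrier.trans Set.sdiff_subset) haY).of_restrict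

theorem IsStrictTeam.connectedIn_component {τ : Preteam α A} (hτ : τ.IsStrictTeam) {b : A}
    {Xb C : Set α} (hXb : Xb.Nonempty ∧ Xb ⊆ (τ.part b).carrier)
    (hC : IsCC ((τ.part b).restrict ((τ.part b).carrier \ Xb)) C) :
    τ.coord.ConnectedIn C := by
  classical
  have hCb : C ⊆ (τ.part b).carrier := fun x hx => (hC.2.1 hx).1
  set X : A → Set α := Function.update (fun c => (τ.part c).carrier) b ((τ.part b).carrier \ C)
  have hXc : ∀ c ≠ b, X c = (τ.part c).carrier := fun c hc => Function.update_of_ne hc _ _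
  have hroots : ∀ c ∈ Set.univ, (X c).Nonempty ∧ X c ⊆ (τ.part c).carrier := by
    intro c _
    obtain rfl | hcb := eq_or_ne c b
    · obtain ⟨x, hx⟩ := hXb.1
      refine ⟨⟨x, by simpa [X] using ⟨hXb.2 hx, fun hxC => (hC.2.1 hxC).2.2 hx⟩⟩, ?_⟩
      simp [X]
    · rw [hXc c hcb]
      exact ⟨τ.part_nonempty c, subset_rfl⟩
  have hCC : IsCC ((τ.part b).restrict ((τ.part b).carrier \ X b)) C := by
    simpa [X, Set.sdiff_sdiff_cancel_left hCb] using AtomicHypergraph.isCC_restrict_self hC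
  obtain ⟨Y, hY, hCY⟩ := (hτ Set.univ X ⟨b, trivial⟩ hroots).2 b trivial C hCC
  have hcarrier : (τ.removed Set.univ X).carrier ⊆ C := by
    refine (τ.removed_carrier_subset (i := b) fun c hc => ⟨trivial, (hXc c hc).ge⟩).trans ?_
    rintro x ⟨hxb, hxX⟩
    by_contra hxC
    exact hxX (Set.mem_biUnion (Set.mem_univ b) (by simpa [X] using ⟨hxb, hxC⟩))
  exact (hY.connectedIn_of_carrier_subset hcarrier hCY).of_restrict

end Preteam

/-- For a strict team and any choice of nonempty `B ⊆ A` and nonempty roots `X b ⊆ H_b`,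
each carrier `H_ã` of the induced index set `Ã` (the carriers `H_a` for `a ∉ B`, together
with the connected components of `H_b` minus `X b` for `b ∈ B`) is connected in the
coordinating hypergraph. -/
theorem stmt7 {α A : Type*} (τ : Preteam α A) (hτ : τ.IsStrictTeam)
    (B : Set A) (hB : B.Nonempty) (X : A → Set α)
    (hX : ∀ b ∈ B, (X b).Nonempty ∧ X b ⊆ (τ.part b).carrier) :
    (∀ a ∉ B, τ.coord.ConnectedIn (τ.part a).carrier) ∧
    (∀ b ∈ B, ∀ C, IsCC ((τ.part b).restrict ((τ.part b).carrier \ X b)) C →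
      τ.coord.ConnectedIn C) := by
  obtain ⟨b, hb⟩ := hB
  exact ⟨fun a ha => hτ.connectedIn_part (b := b) fun hab => ha (hab ▸ hb),
    fun b hb C hC => hτ.connectedIn_component (hX b hb) hC⟩
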